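/- arXiv:1302.2766 — 2 statements merged into one kernel-verified Lean document; each statement's English description precedes it below -/
import Mathlib

section
/- Let $g_n(z)=\sum_{k=0}^{n-1} e^{\pi i k^2/n} z^k$ for integers $n\ge 1$. Then $\|g_n\|_4^4 = n^2 - \epsilon_n + 4\sum_{1\le u\le n/2} \left(\frac{\sin(\pi u^2/n)}{\sin(\pi u/n)}\right)^2$, where $\epsilon_n = 2$ if $n\equiv 2\pmod 4$ and $\epsilon_n = 0$ otherwise. -/
/-!
Write `a_k = e^{πik²/n}` and let `c_d = ∑_{j-k=d} a_j \bar a_k` be the aperiodic autocorrelation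
of the coefficients. On the unit circle `|g_n|² = ∑_{|d|<n} c_d e^{idθ}`, so Parseval gives
`‖g_n‖₄⁴ = ∑_d |c_d|²`, with `c_0 = n` and `|c_{-d}| = |c_d|`. Because `(k+h)² - k²` is linear in `k`,
`a_{k+h} \bar a_k = a_h ω^k` with `ω = e^{2πih/n}`, so `c_h` is a geometric sum of modulus
`|sin(πh(n-h)/n) / sin(πh/n)| = |sin(πh²/n) / sin(πh/n)|` for `0 < h < n`. These terms are invariant
under `h ↦ n - h`, which folds the sum onto `1 ≤ u ≤ n/2`; for even `n` the fixed point `u = n/2`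
is counted once only, and its term `sin²(πn/4)` is `1` exactly when `n ≡ 2 (mod 4)`.
-/

open Finset Complex
open scoped Real ComplexConjugate

noncomputable def gPoly (n : ℕ) (z : ℂ) : ℂ :=
  ∑ k ∈ Finset.range n, Complex.exp (Real.pi * Complex.I * (k : ℂ) ^ 2 / (n : ℂ)) * z ^ k

noncomputable def gNormFour (n : ℕ) : ℝ :=
  (1 / (2 * Real.pi)) *
    ∫ θ in (0 : ℝ)..(2 * Real.pi), ‖gPoly n (Complex.exp (Complex.I * θ))‖ ^ 4

theorem integral_exp_I_mul_int_mul (d : ℤ) :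
    ∫ θ in (0 : ℝ)..2 * π, exp (I * d * θ) = if d = 0 then (2 * π : ℂ) else 0 := by
  split_ifs with hd
  · simp [hd]
  · have hc : I * d ≠ 0 := mul_ne_zero I_ne_zero (Int.cast_ne_zero.mpr hd)
    have hperiod : exp (I * d * ↑(2 * π)) = 1 := by
      rw [← exp_int_mul_two_pi_mul_I d]; push_cast; ring_nf
    rw [integral_exp_mul_complex hc, hperiod]
    simp

theorem mul_exp_mul_conj_mul_exp (x y : ℂ) (d e : ℤ) (θ : ℝ) :
    x * exp (I * d * θ) * conj (y * exp (I * e * θ)) = x * conj y * exp (I * ↑(d - e) * θ) := by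
  rw [map_mul, ← exp_conj, mul_mul_mul_comm, ← exp_add]
  simp only [map_mul, conj_I, map_intCast, conj_ofReal, Int.cast_sub]
  ring_nf

theorem integral_norm_sq_sum_exp (s : Finset ℤ) (c : ℤ → ℂ) :
    ∫ θ in (0 : ℝ)..2 * π, ‖∑ d ∈ s, c d * exp (I * d * θ)‖ ^ 2 =
      2 * π * ∑ d ∈ s, ‖c d‖ ^ 2 := by
  have hexpand (θ : ℝ) : ((‖∑ d ∈ s, c d * exp (I * d * θ)‖ ^ 2 : ℝ) : ℂ) =
      ∑ d ∈ s, ∑ e ∈ s, c d * conj (c e) * exp (I * ↑(d - e) * θ) := by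
    simp only [ofReal_pow, ← mul_conj', map_sum, sum_mul_sum, mul_exp_mul_conj_mul_exp]
  have hcont (d e : ℤ) : Continuous fun θ : ℝ => c d * conj (c e) * exp (I * ↑(d - e) * θ) := by
    fun_prop
  apply ofReal_injective
  rw [← intervalIntegral.integral_ofReal]
  simp_rw [hexpand]
  rw [intervalIntegral.integral_finsetSum fun _ _ => (by fun_prop : Continuous _).intervalIntegrable _ _]
  simp only [intervalIntegral.integral_finsetSum fun _ _ => (hcont _ _).intervalIntegrable _ _,
    intervalIntegral.integral_const_mul, integral_exp_I_mul_int_mul, sub_eq_zero, mul_ite, mul_zero,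
    sum_ite_eq, mul_conj']
  push_cast
  rw [mul_sum]
  refine sum_congr rfl fun d hd => ?_
  rw [if_pos hd, mul_comm]

def autocorr (n : ℕ) (a : ℕ → ℂ) (d : ℤ) : ℂ :=
  ∑ p ∈ (range n ×ˢ range n).filter (fun p => (p.1 : ℤ) - p.2 = d), a p.1 * conj (a p.2)

theorem norm_sq_sum_exp_eq_sum_autocorr (n : ℕ) (a : ℕ → ℂ) (θ : ℝ) :
    ((‖∑ k ∈ range n, a k * exp (I * k * θ)‖ ^ 2 : ℝ) : ℂ) =
      ∑ d ∈ Ioo (-(n : ℤ)) n, autocorr n a d * exp (I * d * θ) := by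
  simp only [← Int.cast_natCast (R := ℂ), ofReal_pow, ← mul_conj', map_sum, sum_mul_sum,
    mul_exp_mul_conj_mul_exp, ← sum_product']
  have hlag : ∀ p ∈ range n ×ˢ range n, (p.1 : ℤ) - p.2 ∈ Ioo (-(n : ℤ)) n := by
    intro p hp
    simp only [mem_product, mem_range] at hp
    simp only [mem_Ioo]
    omega
  rw [← sum_fiberwise_of_maps_to hlag]
  refine sum_congr rfl fun d _ => ?_
  rw [autocorr, sum_mul]
  refine sum_congr rfl fun p hp => ?_
  rw [(mem_filter.mp hp).2]

theorem integral_norm_pow_four_sum_exp (n : ℕ) (a : ℕ → ℂ) :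
    ∫ θ in (0 : ℝ)..2 * π, ‖∑ k ∈ range n, a k * exp (I * k * θ)‖ ^ 4 =
      2 * π * ∑ d ∈ Ioo (-(n : ℤ)) n, ‖autocorr n a d‖ ^ 2 := by
  have hsq (θ : ℝ) : ‖∑ k ∈ range n, a k * exp (I * k * θ)‖ ^ 4 =
      ‖∑ d ∈ Ioo (-(n : ℤ)) n, autocorr n a d * exp (I * d * θ)‖ ^ 2 := by
    rw [← norm_sq_sum_exp_eq_sum_autocorr, norm_real, Real.norm_of_nonneg (by positivity)]
    ring
  simp_rw [hsq]
  exact integral_norm_sq_sum_exp _ _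

theorem autocorr_neg (n : ℕ) (a : ℕ → ℂ) (d : ℤ) : autocorr n a (-d) = conj (autocorr n a d) := by
  rw [autocorr, autocorr, map_sum]
  refine sum_equiv (Equiv.prodComm ℕ ℕ) (fun p => ?_) fun p _ => ?_
  · simp only [mem_filter, mem_product, mem_range, Equiv.prodComm_apply, Prod.fst_swap, Prod.snd_swap]
    omega
  · simp [mul_comm]

theorem autocorr_natCast (n : ℕ) (a : ℕ → ℂ) (h : ℕ) :
    autocorr n a h = ∑ k ∈ range (n - h), a (k + h) * conj (a k) := by
  rw [autocorr]
  refine sum_nbij' Prod.snd (fun k => (k + h, k)) ?_ ?_ ?_ ?_ ?_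
  · intro p hp
    simp only [mem_filter, mem_product, mem_range] at hp ⊢
    omega
  · intro k hk
    simp only [mem_filter, mem_product, mem_range] at hk ⊢
    omega
  · intro p hp
    simp only [mem_filter] at hp
    exact Prod.ext (by dsimp; omega) rfl
  · intro k _
    rfl
  · intro p hp
    simp only [mem_filter] at hp
    rw [show p.1 = p.2 + h by omega]

noncomputable def chirp (n k : ℕ) : ℂ := exp (π * I * (k : ℂ) ^ 2 / n)

theorem gPoly_eq_sum_chirp (n : ℕ) (z : ℂ) : gPoly n z = ∑ k ∈ range n, chirp n k * z ^ k := rfl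

theorem norm_chirp (n k : ℕ) : ‖chirp n k‖ = 1 := by
  rw [chirp, show π * I * (k : ℂ) ^ 2 / n = ((π * k ^ 2 / n : ℝ) : ℂ) * I by push_cast; ring]
  exact norm_exp_ofReal_mul_I _

theorem chirp_add_mul_conj_chirp (n k h : ℕ) :
    chirp n (k + h) * conj (chirp n k) = chirp n h * exp (I * (2 * π * h / n : ℝ)) ^ k := by
  simp only [chirp, ← exp_conj, ← exp_nat_mul, ← exp_add, map_div₀, map_mul, map_pow,
    conj_ofReal, conj_I, map_natCast]
  congr 1
  push_cast
  ring

theorem norm_geom_sum_exp_I_mul (t : ℝ) (m : ℕ) (ht : Real.sin (t / 2) ≠ 0) :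
    ‖∑ k ∈ range m, exp (I * t) ^ k‖ = |Real.sin (m * t / 2)| / |Real.sin (t / 2)| := by
  have hne : exp (I * t) ≠ 1 := by
    intro h
    have := norm_exp_I_mul_ofReal_sub_one t
    rw [h, sub_self, norm_zero, norm_mul] at this
    norm_num at this
    exact ht this
  rw [geom_sum_eq hne, norm_div, ← exp_nat_mul, show (m : ℂ) * (I * t) = I * ↑(m * t) by push_cast; ring,
    norm_exp_I_mul_ofReal_sub_one, norm_exp_I_mul_ofReal_sub_one, norm_mul, norm_mul,
    mul_div_mul_left _ _ (by norm_num), Real.norm_eq_abs, Real.norm_eq_abs]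

noncomputable def sinRatioSq (n u : ℕ) : ℝ :=
  (Real.sin (π * (u : ℝ) ^ 2 / n) / Real.sin (π * (u : ℝ) / n)) ^ 2

theorem autocorr_chirp_zero (n : ℕ) : autocorr n (chirp n) 0 = n := by
  rw [← Nat.cast_zero, autocorr_natCast]
  simp [mul_conj', norm_chirp]

theorem norm_autocorr_chirp_sq {n h : ℕ} (h0 : 0 < h) (hn : h < n) :
    ‖autocorr n (chirp n) h‖ ^ 2 = sinRatioSq n h := by
  have hn0 : (n : ℝ) ≠ 0 := Nat.cast_ne_zero.mpr (by omega)
  have hhalf : 2 * π * h / n / 2 = π * h / n := by ring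
  have hsin : Real.sin (π * h / n) ≠ 0 := by
    refine (Real.sin_pos_of_pos_of_lt_pi (by positivity) ?_).ne'
    rw [div_lt_iff₀ (by positivity)]
    gcongr
  have hnum : ((n - h : ℕ) : ℝ) * (2 * π * h / n) / 2 = h * π - π * h ^ 2 / n := by
    rw [Nat.cast_sub hn.le]
    field_simp
  rw [autocorr_natCast, sum_congr rfl fun k _ => chirp_add_mul_conj_chirp n k h, ← mul_sum,
    norm_mul, norm_chirp, one_mul, norm_geom_sum_exp_I_mul _ _ (hhalf ▸ hsin), hnum, hhalf,
    Real.sin_nat_mul_pi_sub, abs_neg, abs_mul, abs_pow, abs_neg, abs_one, one_pow, one_mul,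
    div_pow, sq_abs, sq_abs, ← div_pow, sinRatioSq]

theorem sum_Ioo_neg_of_even {M : Type*} [AddCommMonoid M] (f : ℤ → M) (hf : f.Even)
    {n : ℕ} (hn : 0 < n) :
    ∑ d ∈ Ioo (-(n : ℤ)) n, f d = f 0 + 2 • ∑ h ∈ Icc 1 (n - 1), f h := by
  obtain ⟨m, rfl⟩ : ∃ m, n = m + 1 := ⟨n - 1, by omega⟩
  rw [Nat.add_sub_cancel]
  push_cast
  clear hn
  induction m with
  | zero => simp [show Ioo (-1 : ℤ) 1 = {0} by rfl]
  | succ m ih =>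
    have hIoo : Ioo (-((m + 1 : ℕ) + 1 : ℤ)) ((m + 1 : ℕ) + 1) =
        insert ((m : ℤ) + 1) (insert (-((m : ℤ) + 1)) (Ioo (-((m : ℤ) + 1)) (m + 1))) := by
      ext d
      simp only [mem_insert, mem_Ioo]
      omega
    rw [hIoo, sum_insert (by simp; omega), sum_insert (by simp), ih, hf, sum_Icc_succ_top (by omega)]
    push_cast
    abel

theorem sum_Icc_one_sub_one_of_symm {M : Type*} [AddCommMonoid M] (n : ℕ) (T : ℕ → M)
    (hT : ∀ h < n, T (n - h) = T h) :
    ∑ h ∈ Icc 1 (n - 1), T h = ∑ u ∈ Icc 1 (n / 2), T u + ∑ u ∈ Icc 1 ((n - 1) / 2), T u := by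
  have hIcc (k : ℕ) : Icc 1 k = Ioc 0 k := by ext; simp; omega
  have hreflect : ∑ h ∈ Ioc (n / 2) (n - 1), T h = ∑ u ∈ Ioc 0 ((n - 1) / 2), T u := by
    refine sum_nbij' (n - ·) (n - ·) ?_ ?_ ?_ ?_ ?_ <;> intro h hh <;>
      simp only [mem_Ioc] at hh ⊢ <;> first | omega | exact (hT h (by omega)).symm
  rw [hIcc, hIcc, hIcc, ← sum_Ioc_consecutive T (Nat.zero_le _) (by omega : n / 2 ≤ n - 1), hreflect]

theorem sinRatioSq_sub_self {n h : ℕ} (hh : h < n) : sinRatioSq n (n - h) = sinRatioSq n h := by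
  have hn0 : (n : ℝ) ≠ 0 := Nat.cast_ne_zero.mpr (by omega)
  have hden : π * ((n - h : ℕ) : ℝ) / n = π - π * h / n := by
    rw [Nat.cast_sub hh.le]
    field_simp
  have hnum : π * ((n - h : ℕ) : ℝ) ^ 2 / n = π * h ^ 2 / n + ((n - 2 * h : ℤ) : ℝ) * π := by
    rw [Nat.cast_sub hh.le]
    push_cast
    field_simp
    ring
  rw [sinRatioSq, sinRatioSq, hden, hnum, Real.sin_pi_sub, Real.sin_add_int_mul_pi, mul_div_assoc,
    mul_pow, ← sq_abs ((-1 : ℝ) ^ _), abs_neg_one_zpow, one_pow, one_mul]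

theorem sinRatioSq_two_mul_self {m : ℕ} (hm : 0 < m) :
    sinRatioSq (2 * m) m = if Odd m then 1 else 0 := by
  have hm0 : (m : ℝ) ≠ 0 := Nat.cast_ne_zero.mpr hm.ne'
  have hden : π * (m : ℝ) / ((2 * m : ℕ) : ℝ) = π / 2 := by
    push_cast
    field_simp
  have hnum : π * (m : ℝ) ^ 2 / ((2 * m : ℕ) : ℝ) = m * π / 2 := by
    push_cast
    field_simp
  rw [sinRatioSq, hden, hnum, Real.sin_pi_div_two, div_one]
  split_ifs with hodd
  · obtain ⟨t, rfl⟩ := hodd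
    rw [show ((2 * t + 1 : ℕ) : ℝ) * π / 2 = π / 2 + t * π by push_cast; ring, Real.sin_add_nat_mul_pi,
      Real.sin_pi_div_two, mul_one, ← pow_mul, pow_mul', neg_one_sq, one_pow]
  · obtain ⟨t, rfl⟩ := Nat.not_odd_iff_even.mp hodd
    rw [show ((t + t : ℕ) : ℝ) * π / 2 = t * π by push_cast; ring, Real.sin_nat_mul_pi]
    norm_num

theorem sum_Icc_half_sinRatioSq {n : ℕ} (hn : 0 < n) :
    ∑ u ∈ Icc 1 (n / 2), sinRatioSq n u =
      ∑ u ∈ Icc 1 ((n - 1) / 2), sinRatioSq n u + if n % 4 = 2 then 1 else 0 := by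
  rcases Nat.even_or_odd' n with ⟨m, rfl | rfl⟩
  · obtain ⟨k, rfl⟩ : ∃ k, m = k + 1 := ⟨m - 1, by omega⟩
    have hodd : Odd (k + 1) ↔ 2 * (k + 1) % 4 = 2 := by rw [Nat.odd_iff]; omega
    rw [show 2 * (k + 1) / 2 = k + 1 by omega, show (2 * (k + 1) - 1) / 2 = k by omega,
      sum_Icc_succ_top (by omega), sinRatioSq_two_mul_self (by omega)]
    simp only [hodd]
  · rw [show (2 * m + 1) / 2 = m by omega, show (2 * m + 1 - 1) / 2 = m by omega, if_neg (by omega),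
      add_zero]

theorem gNormFour_eq_sum_norm_autocorr_sq (n : ℕ) :
    gNormFour n = ∑ d ∈ Ioo (-(n : ℤ)) n, ‖autocorr n (chirp n) d‖ ^ 2 := by
  have hpoly (θ : ℝ) : gPoly n (exp (I * θ)) = ∑ k ∈ range n, chirp n k * exp (I * k * θ) := by
    simp only [gPoly_eq_sum_chirp, ← exp_nat_mul, mul_left_comm, mul_assoc]
  rw [gNormFour]
  simp_rw [hpoly]
  rw [integral_norm_pow_four_sum_exp]
  field_simp

/-- `‖g_n‖₄⁴ = n² - ε_n + 4 ∑_{1 ≤ u ≤ n/2} (sin(π u²/n)/sin(π u/n))²`, where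
`ε_n = 2` for `n ≡ 2 (mod 4)` and `ε_n = 0` otherwise. -/
theorem gNormFour_formula (n : ℕ) (hn : 1 ≤ n) :
    gNormFour n =
      (n : ℝ) ^ 2 - (if n % 4 = 2 then (2 : ℝ) else 0) +
        4 * ∑ u ∈ Finset.Icc 1 (n / 2),
          (Real.sin (Real.pi * (u : ℝ) ^ 2 / n) / Real.sin (Real.pi * (u : ℝ) / n)) ^ 2 := by
  have heven : Function.Even fun d => ‖autocorr n (chirp n) d‖ ^ 2 := fun d => by
    dsimp only
    rw [autocorr_neg, norm_conj]
  have hlags : ∑ h ∈ Icc 1 (n - 1), ‖autocorr n (chirp n) h‖ ^ 2 =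
      ∑ h ∈ Icc 1 (n - 1), sinRatioSq n h :=
    sum_congr rfl fun h hh => by
      rw [mem_Icc] at hh
      exact norm_autocorr_chirp_sq (by omega) (by omega)
  change _ = _ - _ + 4 * ∑ u ∈ Icc 1 (n / 2), sinRatioSq n u
  rw [gNormFour_eq_sum_norm_autocorr_sq, sum_Ioo_neg_of_even _ heven hn, autocorr_chirp_zero, hlags,
    sum_Icc_one_sub_one_of_symm n _ fun _ hh => sinRatioSq_sub_self hh, sum_Icc_half_sinRatioSq hn]
  simp only [Complex.norm_natCast, nsmul_eq_mul]
  split_ifs <;> ring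
end

section
/- Define $p(y) = \frac{y - \sin y\cos y}{(\sin y)^2}$ for $0 < y \le \pi/2$. Then: (i) $-3 < p'(y) \le 2$ for all $0 < y \le \pi/2$; (ii) $\lim_{y\to 0^+} p(y) = 0$; and (iii) $\int_0^{\pi/2} p(y)\,dy = 1$. -/
/-!
The numerator of `p` has derivative `2 sin² y`, so `p' = 2 - 2 cot y · p`. Since `sin y cos y ≤ y`,
`p ≥ 0`, hence `p' ≤ 2` on `(0, π/2]`. The inequality `y cos y ≤ sin y` on `[0, π]` (the difference
has derivative `y sin y ≥ 0`) gives `cot y · p(y) ≤ 1`, hence `p' ≥ 0`, and `p(y) ≤ y` on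
`[0, π/2]`, hence `p(y) → 0`. An antiderivative is `-y cot y`, and `y cot y = cos y / sinc y → 1`
at `0`, so the integral is `0 - (-1) = 1`.
-/

/-- `p(y) = (y - sin y cos y)/(sin y)²`.  (At `y = 0` this formula evaluates to `0` in Lean,
which agrees with the continuous extension.) -/
noncomputable def pFun (y : ℝ) : ℝ :=
  (y - Real.sin y * Real.cos y) / (Real.sin y) ^ 2

open Real Set Filter
open scoped Topology

lemma Real.mul_cos_le_sin {y : ℝ} (hy₀ : 0 ≤ y) (hy : y ≤ π) : y * cos y ≤ sin y := by
  have hderiv (x : ℝ) : HasDerivAt (fun x => sin x - x * cos x) (x * sin x) x := by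
    refine ((hasDerivAt_sin x).sub ((hasDerivAt_id' x).mul (hasDerivAt_cos x))).congr_deriv ?_
    ring
  have hmono : MonotoneOn (fun x => sin x - x * cos x) (Icc 0 π) := by
    refine monotoneOn_of_hasDerivWithinAt_nonneg (convex_Icc 0 π)
      (fun x _ => (hderiv x).continuousAt.continuousWithinAt)
      (fun x _ => (hderiv x).hasDerivWithinAt) fun x hx => ?_
    rw [interior_Icc] at hx
    exact mul_nonneg hx.1.le (sin_nonneg_of_nonneg_of_le_pi hx.1.le hx.2.le)
  simpa using hmono ⟨le_rfl, pi_pos.le⟩ ⟨hy₀, hy⟩ hy₀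

lemma Real.sin_mul_cos_le_self {y : ℝ} (hy : 0 ≤ y) : sin y * cos y ≤ y := by
  have := sin_le (by positivity : 0 ≤ 2 * y)
  rw [sin_two_mul] at this
  linarith

lemma Real.hasDerivAt_cot {x : ℝ} (hs : sin x ≠ 0) : HasDerivAt cot (-1 / sin x ^ 2) x := by
  have hcot : cot = fun x => cos x / sin x := funext cot_eq_cos_div_sin
  rw [hcot]
  refine ((hasDerivAt_cos x).div (hasDerivAt_sin x) hs).congr_deriv ?_
  field_simp
  linear_combination -sin_sq_add_cos_sq x

lemma Real.tendsto_mul_cot_nhdsNE_zero : Tendsto (fun x => x * cot x) (𝓝[≠] 0) (𝓝 1) := by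
  have hcont : ContinuousAt (fun x => cos x / sinc x) 0 :=
    continuous_cos.continuousAt.div continuous_sinc.continuousAt (by simp)
  have := hcont.tendsto.mono_left (nhdsWithin_le_nhds (s := {0}ᶜ))
  simp only [cos_zero, sinc_zero, div_one] at this
  refine this.congr' ?_
  filter_upwards [self_mem_nhdsWithin] with x hx
  rw [sinc_of_ne_zero hx, cot_eq_cos_div_sin]
  field_simp

lemma hasDerivAt_pFun {y : ℝ} (hs : sin y ≠ 0) :
    HasDerivAt pFun (2 - 2 * cot y * pFun y) y := by
  have := ((hasDerivAt_id' y).sub ((hasDerivAt_sin y).mul (hasDerivAt_cos y))).div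
    ((hasDerivAt_sin y).pow 2) (pow_ne_zero 2 hs)
  refine this.congr_deriv ?_
  simp only [Pi.sub_apply, Pi.mul_apply, Pi.pow_apply]
  rw [cot_eq_cos_div_sin, pFun]
  field_simp
  linear_combination -sin y ^ 2 * sin_sq_add_cos_sq y

lemma hasDerivAt_neg_mul_cot {y : ℝ} (hs : sin y ≠ 0) :
    HasDerivAt (fun x => -(x * cot x)) (pFun y) y := by
  refine ((hasDerivAt_id' y).mul (hasDerivAt_cot hs)).neg.congr_deriv ?_
  rw [cot_eq_cos_div_sin, pFun]
  field_simp
  ring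

lemma pFun_nonneg {y : ℝ} (hy : 0 ≤ y) : 0 ≤ pFun y :=
  div_nonneg (sub_nonneg.2 (sin_mul_cos_le_self hy)) (sq_nonneg _)

lemma pFun_le_self {y : ℝ} (hy₀ : 0 ≤ y) (hy : y ≤ π / 2) : pFun y ≤ y := by
  have hc : 0 ≤ cos y := cos_nonneg_of_mem_Icc ⟨by linarith [pi_pos], hy⟩
  have hyc : y * cos y ≤ sin y := mul_cos_le_sin hy₀ (by linarith [pi_pos])
  refine div_le_of_le_mul₀ (sq_nonneg _) hy₀ ?_
  nlinarith [mul_nonneg hc (sub_nonneg.2 hyc), sin_sq_add_cos_sq y]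

lemma cot_mul_pFun_le_one {y : ℝ} (hy₀ : 0 < y) (hy : y < π) : cot y * pFun y ≤ 1 := by
  have hs : 0 < sin y := sin_pos_of_pos_of_lt_pi hy₀ hy
  rw [cot_eq_cos_div_sin, pFun, div_mul_div_comm, div_le_one (by positivity)]
  nlinarith [mul_cos_le_sin hy₀.le hy.le, sin_sq_add_cos_sq y]

lemma deriv_pFun_mem_Icc {y : ℝ} (hy₀ : 0 < y) (hy : y ≤ π / 2) : deriv pFun y ∈ Icc 0 2 := by
  have hyπ : y < π := by linarith [pi_pos]
  have hs : 0 < sin y := sin_pos_of_pos_of_lt_pi hy₀ hyπ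
  have hcot : 0 ≤ cot y :=
    cot_eq_cos_div_sin y ▸ div_nonneg (cos_nonneg_of_mem_Icc ⟨by linarith, hy⟩) hs.le
  rw [(hasDerivAt_pFun hs.ne').deriv]
  constructor
  · linarith [cot_mul_pFun_le_one hy₀ hyπ]
  · nlinarith [mul_nonneg hcot (pFun_nonneg hy₀.le)]

lemma tendsto_pFun_nhdsGT_zero : Tendsto pFun (𝓝[>] 0) (𝓝 0) := by
  have hbounds : ∀ᶠ y in 𝓝[>] 0, 0 ≤ pFun y ∧ pFun y ≤ y := by
    filter_upwards [Ioo_mem_nhdsGT (by positivity : (0 : ℝ) < π / 2)] with y hy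
    exact ⟨pFun_nonneg hy.1.le, pFun_le_self hy.1.le hy.2.le⟩
  refine tendsto_of_tendsto_of_tendsto_of_le_of_le' tendsto_const_nhds ?_
    (hbounds.mono fun _ h => h.1) (hbounds.mono fun _ h => h.2)
  exact tendsto_nhdsWithin_of_tendsto_nhds tendsto_id

lemma continuousOn_pFun : ContinuousOn pFun (Ico 0 π) := by
  rintro y ⟨hy₀, hy⟩
  rcases hy₀.eq_or_lt with rfl | hy₀
  · have h0 : pFun 0 = 0 := by simp [pFun]
    have hright : ContinuousWithinAt pFun (Ioi 0) 0 := by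
      rw [ContinuousWithinAt, h0]
      exact tendsto_pFun_nhdsGT_zero
    exact (continuousWithinAt_Ioi_iff_Ici.mp hright).mono Ico_subset_Ici_self
  · exact (hasDerivAt_pFun (sin_pos_of_pos_of_lt_pi hy₀ hy).ne').continuousAt.continuousWithinAt

lemma integral_pFun : ∫ y in (0 : ℝ)..(π / 2), pFun y = 1 := by
  have hπ : 0 < π / 2 := by positivity
  have hint : IntervalIntegrable pFun MeasureTheory.volume 0 (π / 2) :=
    (continuousOn_pFun.mono (Icc_subset_Ico_right (by linarith))).intervalIntegrable_of_Icc hπ.le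
  have h0 : Tendsto (fun x => -(x * cot x)) (𝓝[>] 0) (𝓝 (-1)) :=
    tendsto_mul_cot_nhdsNE_zero.neg.mono_left (nhdsWithin_mono _ fun _ hx => ne_of_gt hx)
  have hπ2 : Tendsto (fun x => -(x * cot x)) (𝓝[<] (π / 2)) (𝓝 0) := by
    have := (hasDerivAt_neg_mul_cot (by simp : sin (π / 2) ≠ 0)).continuousAt.tendsto
    simpa [cot_eq_cos_div_sin] using this.mono_left nhdsWithin_le_nhds
  rw [intervalIntegral.integral_eq_sub_of_hasDerivAt_of_tendsto hπ
    (fun x hx => hasDerivAt_neg_mul_cot (sin_pos_of_pos_of_lt_pi hx.1 (by linarith [hx.2])).ne')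
    hint h0 hπ2]
  norm_num

/-- (i) `-3 < p'(y) ≤ 2` on `(0, π/2]`; (ii) `p(y) → 0` as `y → 0⁺`;
(iii) `∫_0^{π/2} p(y) dy = 1`. -/
theorem pFun_properties :
    (∀ y : ℝ, 0 < y → y ≤ Real.pi / 2 → -3 < deriv pFun y ∧ deriv pFun y ≤ 2) ∧
    Filter.Tendsto pFun (nhdsWithin 0 (Set.Ioi 0)) (nhds 0) ∧
    ∫ y in (0 : ℝ)..(Real.pi / 2), pFun y = 1 := by
  refine ⟨fun y hy₀ hy => ?_, tendsto_pFun_nhdsGT_zero, integral_pFun⟩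
  obtain ⟨hlow, hupp⟩ := deriv_pFun_mem_Icc hy₀ hy
  exact ⟨by linarith, hupp⟩
end
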